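/- Let (𝒜, φ) be a non-commutative probability space and, for each N ≥ 1, let a_1, …, a_N ∈ 𝒜 satisfy φ(a_i) = 0, φ(a_i²) = 1, have uniformly bounded moments of all orders, and be BMT independent with respect to a digraph G_N = ([N], E_N). Let M_N be the largest integer M ≥ 0 such that G_N contains a complete digraph on M vertices, and suppose liminf_{N→∞} M_N/N > 0. If for every k ≥ 1 the limit m_{2k} = lim_{N→∞} φ(((a_1 + ⋯ + a_N)/√N)^{2k}) exists, then for every real c with 0 < c < liminf_{N→∞} M_N/(2N) one has m_{2k} ≥ (2k−1)!! · c^k for all k ≥ 1; consequently sup_{k ≥ 1} (m_{2k})^{1/(2k)} = +∞, so the limiting distribution (if it exists as a probability measure on ℝ) does not have compact support. -/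

import Mathlib

open scoped Classical
open Filter

noncomputable section

/-- The relation defining the kernel of `f` restricted to the index set `S`,
subordinated to the digraph with edge relation `E`: `k ∼ k'` iff `f k = f k'` and
every `l ∈ S` strictly between `k` and `k'` with `f l ≠ f k` satisfies `(f l, f k) ∈ E`. -/
def kerGRelOn {m : ℕ} {V : Type*} (E : V → V → Prop) (f : Fin m → V)
    (S : Finset (Fin m)) (k k' : Fin m) : Prop :=
  f k = f k' ∧ ∀ l ∈ S, min k k' < l → l < max k k' → f l ≠ f k → E (f l) (f k)

/-- The blocks of the kernel of `f|_S` subordinated to the digraph `E`. -/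
def kerGBlocks {m : ℕ} {V : Type*} (E : V → V → Prop) (f : Fin m → V)
    (S : Finset (Fin m)) : Finset (Finset (Fin m)) :=
  S.image fun k => S.filter fun k' => kerGRelOn E f S k k'

/-- The blocks of the plain kernel `ker[f]` of `f : [m] → V`. -/
def kerBlocks {m : ℕ} {V : Type*} (f : Fin m → V) : Finset (Finset (Fin m)) :=
  Finset.univ.image fun k => Finset.univ.filter fun k' => f k = f k'

/-- The product of `a k` for `k ∈ B`, taken in increasing order of `k`. -/
def blockProd {A : Type*} [Monoid A] {m : ℕ} (a : Fin m → A) (B : Finset (Fin m)) : A :=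
  ((B.sort (· ≤ ·)).map a).prod

/-- The edge set of the nesting-crossing graph of the partition `π`, relabeled along `f`:
the pair `(f-label of B, f-label of C)` is an edge whenever `B ≠ C` are blocks of `π` and
some `l ∈ B` lies strictly between two elements (equivalently, between min and max) of `C`. -/
def nestCrossEdges {m : ℕ} {V : Type*} (π : Finset (Finset (Fin m))) (f : Fin m → V) :
    Set (V × V) :=
  { p | ∃ B ∈ π, ∃ C ∈ π, B ≠ C ∧
      (∃ l ∈ B, ∃ c₁ ∈ C, ∃ c₂ ∈ C, c₁ < l ∧ l < c₂) ∧
      (∃ k ∈ B, f k = p.1) ∧ (∃ k' ∈ C, f k' = p.2) }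

/-- A family of (non-unital) subalgebras of a non-commutative probability space `(𝒜, φ)`
is BMT independent with respect to the digraph `E` on the index set `I`. -/
def BMTIndep {𝒜 : Type*} [Ring 𝒜] [Algebra ℂ 𝒜] (φ : 𝒜 →ₗ[ℂ] ℂ)
    {I : Type*} (E : I → I → Prop) (A : I → NonUnitalSubalgebra ℂ 𝒜) : Prop :=
  ∀ (m : ℕ), 1 ≤ m → ∀ (idx : Fin m → I) (a : Fin m → 𝒜),
    (∀ k, a k ∈ A (idx k)) →
    φ (List.ofFn a).prod = ∏ B ∈ kerGBlocks E idx Finset.univ, φ (blockProd a B)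

/-- Random variables `a 0, …, a (N-1)` are BMT independent with respect to the digraph `E`. -/
def BMTIndepVars {𝒜 : Type*} [Ring 𝒜] [Algebra ℂ 𝒜] (φ : 𝒜 →ₗ[ℂ] ℂ)
    {N : ℕ} (E : Fin N → Fin N → Prop) (a : Fin N → 𝒜) : Prop :=
  ∀ (m : ℕ) (idx : Fin m → Fin N),
    φ (List.ofFn fun k => a (idx k)).prod
      = ∏ B ∈ kerGBlocks E idx Finset.univ, φ (blockProd (fun k => a (idx k)) B)

/-!
Expand `φ ((a_1 + ⋯ + a_N) ^ (2k))` over words and evaluate each word by BMT independence.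
A word with a letter occurring once vanishes, the variables being centred. A word using at least
`k` letters and no letter once uses every letter exactly twice; either `ker_G = ker`, and it
contributes `φ(a_i²)^k = 1`, or some pair splits into two singleton blocks of `ker_G` and it
contributes `0`. The remaining words use fewer than `k` letters: there are `O(N^(k-1))` of them,
with uniformly bounded values. So `m_{2k}` is the limit of `N^(-k)` times the number of good
pairings, and pairings labelled injectively by the vertices of a complete subgraph are good,
giving at least `(2k-1)‼ (M_N)_k ≥ (2k-1)‼ (cN)^k` of them. Finally `(2k-1)‼ ≥ k!`.
-/

open Finset

section Kernel

variable {m : ℕ} {V : Type*}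

def fiber [DecidableEq V] (f : Fin m → V) (k : Fin m) : Finset (Fin m) :=
  univ.filter fun l => f l = f k

@[simp]
lemma mem_fiber [DecidableEq V] {f : Fin m → V} {k l : Fin m} : l ∈ fiber f k ↔ f l = f k := by
  simp [fiber]

def kerGClass (E : V → V → Prop) (f : Fin m → V) (k : Fin m) : Finset (Fin m) :=
  univ.filter (kerGRelOn E f univ k)

variable {E : V → V → Prop} {f : Fin m → V}

lemma kerGBlocks_univ : kerGBlocks E f univ = univ.image (kerGClass E f) := rfl

lemma mem_kerGClass {k l : Fin m} : l ∈ kerGClass E f k ↔ kerGRelOn E f univ k l := by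
  simp [kerGClass]

lemma kerGRelOn_refl (S : Finset (Fin m)) (k : Fin m) : kerGRelOn E f S k k :=
  ⟨rfl, fun _ _ h₁ h₂ _ => absurd (h₁.trans h₂) (by simp)⟩

lemma kerGClass_subset_fiber [DecidableEq V] (k : Fin m) : kerGClass E f k ⊆ fiber f k :=
  fun _ hl => mem_fiber.2 (mem_kerGClass.1 hl).1.symm

lemma kerGClass_eq_singleton {k : Fin m} (h : ∀ l, kerGRelOn E f univ k l → l = k) :
    kerGClass E f k = {k} := by
  ext l
  rw [mem_kerGClass, mem_singleton]
  exact ⟨h l, fun hl => hl ▸ kerGRelOn_refl _ _⟩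

lemma kerGClass_eq_fiber [DecidableEq V] {k : Fin m} (h : ∀ l, f k = f l → kerGRelOn E f univ k l) :
    kerGClass E f k = fiber f k := by
  ext l
  rw [mem_kerGClass, mem_fiber]
  exact ⟨fun hl => hl.1.symm, fun hl => h l hl.symm⟩

end Kernel

section Pairing

variable {m : ℕ} {V : Type*} [DecidableEq V]

/-- `ker[f]` is a pair partition. -/
def IsPairing (f : Fin m → V) : Prop :=
  ∀ i, #(fiber f i) = 2

/-- `ker_G[f]` is a pair partition and coincides with `ker[f]`. -/
def IsGoodPairing (E : V → V → Prop) (f : Fin m → V) : Prop :=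
  IsPairing f ∧ ∀ k l, f k = f l → kerGRelOn E f univ k l

lemma isPairing_of_two_le_card_fiber {f : Fin m → V} (h : ∀ i, 2 ≤ #(fiber f i))
    (hm : m ≤ 2 * #(univ.image f)) : IsPairing f := by
  have hle : ∀ x ∈ univ.image f, 2 ≤ #{i ∈ univ | f i = x} := by
    rintro _ hx
    obtain ⟨i, -, rfl⟩ := mem_image.1 hx
    exact h i
  have hsum : ∑ _x ∈ univ.image f, 2 = ∑ x ∈ univ.image f, #{i ∈ univ | f i = x} := by
    refine le_antisymm (sum_le_sum hle) ?_
    rw [← card_eq_sum_card_image, sum_const, card_univ, Fintype.card_fin, smul_eq_mul]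
    omega
  intro i
  exact ((sum_eq_sum_iff_of_le hle).1 hsum (f i) (mem_image_of_mem f (mem_univ i))).symm

end Pairing

section Counting

lemma exists_comp_eq_of_card_image_le {α β : Type*} [Fintype α] [DecidableEq β] [Nonempty β]
    {f : α → β} {r : ℕ} (h : #(univ.image f) ≤ r) :
    ∃ (g : α → Fin r) (h : Fin r → β), h ∘ g = f := by
  let e : univ.image f ↪ Fin r := (univ.image f).equivFin.toEmbedding.trans (Fin.castLEEmb h)
  exact ⟨fun x => e ⟨f x, mem_image_of_mem f (mem_univ x)⟩,
    Function.extend e Subtype.val fun _ => Classical.arbitrary β,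
    funext fun x => e.injective.extend_apply Subtype.val _ ⟨f x, _⟩⟩

lemma card_filter_card_image_le {α β : Type*} [Fintype α] [DecidableEq α] [Fintype β]
    [DecidableEq β] [Nonempty β] (r : ℕ) :
    #{f : α → β | #(univ.image f) ≤ r} ≤ r ^ Fintype.card α * Fintype.card β ^ r := by
  calc #{f : α → β | #(univ.image f) ≤ r}
      ≤ #(univ.image fun p : (α → Fin r) × (Fin r → β) => p.2 ∘ p.1) := by
        refine card_le_card fun f hf => mem_image.2 ?_
        obtain ⟨g, h, hgh⟩ := exists_comp_eq_of_card_image_le (mem_filter.1 hf).2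
        exact ⟨(g, h), mem_univ _, hgh⟩
    _ ≤ _ := card_image_le.trans (by simp)

variable {V : Type*}

/-- Every pair partition of `[m + 2]` arises by pairing `0` with some `t + 1` and pair-partitioning
the remaining `m` points. -/
def insertPair {m : ℕ} (t : Fin (m + 1)) (v : V) (p : Fin m → V) : Fin (m + 2) → V :=
  Fin.cons v (Fin.insertNth t v p)

@[simp]
lemma insertPair_zero {m : ℕ} (t : Fin (m + 1)) (v : V) (p : Fin m → V) :
    insertPair t v p 0 = v := rfl

@[simp]
lemma insertPair_succ_self {m : ℕ} (t : Fin (m + 1)) (v : V) (p : Fin m → V) :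
    insertPair t v p t.succ = v := by
  simp [insertPair]

@[simp]
lemma insertPair_succ_succAbove {m : ℕ} (t : Fin (m + 1)) (v : V) (p : Fin m → V)
    (j : Fin m) : insertPair t v p (t.succAbove j).succ = p j := by
  simp [insertPair]

lemma insertPair_eq_or {m : ℕ} (t : Fin (m + 1)) (v : V) (p : Fin m → V) (i : Fin (m + 2)) :
    insertPair t v p i = v ∨ ∃ j, insertPair t v p i = p j := by
  induction i using Fin.cases with
  | zero => exact Or.inl rfl
  | succ i =>
    by_cases hi : i = t
    · exact Or.inl (hi ▸ insertPair_succ_self t v p)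
    · obtain ⟨j, rfl⟩ := Fin.exists_succAbove_eq hi
      exact Or.inr ⟨j, insertPair_succ_succAbove t v p j⟩

lemma insertPair_inj {m : ℕ} {t t' : Fin (m + 1)} {v v' : V} {p p' : Fin m → V}
    (hv : ∀ j, p j ≠ v) (h : insertPair t v p = insertPair t' v' p') :
    t = t' ∧ v = v' ∧ p = p' := by
  have hvv : v = v' := congr_fun h 0
  subst hvv
  have htt : t = t' := by
    by_contra hne
    obtain ⟨j, rfl⟩ := Fin.exists_succAbove_eq (Ne.symm hne)
    have := congr_fun h (t.succAbove j).succ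
    rw [insertPair_succ_succAbove, insertPair_succ_self] at this
    exact hv j this
  subst htt
  refine ⟨rfl, rfl, funext fun j => ?_⟩
  simpa using congr_fun h (t.succAbove j).succ

variable [DecidableEq V]

lemma card_filter_insertPair_eq {m : ℕ} (t : Fin (m + 1)) (v : V) (p : Fin m → V) (x : V) :
    #{i | insertPair t v p i = x} = #{j | p j = x} + if v = x then 2 else 0 := by
  simp only [card_filter]
  rw [Fin.sum_univ_succ, Fin.sum_univ_succAbove _ t]
  by_cases hvx : v = x
  · simp [hvx]; ring
  · simp [hvx]

lemma IsPairing.insertPair {m : ℕ} {p : Fin m → V} (hp : IsPairing p) {v : V}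
    (hv : ∀ j, p j ≠ v) (t : Fin (m + 1)) : IsPairing (insertPair t v p) := by
  intro i
  rw [fiber, card_filter_insertPair_eq]
  rcases insertPair_eq_or t v p i with h | ⟨j, h⟩
  · rw [h, if_pos rfl, filter_false_of_mem fun j _ => hv j, card_empty]
  · rw [h, if_neg (hv j).symm]
    exact hp j

variable [Fintype V]

def pairings (m : ℕ) (J : Finset V) : Finset (Fin m → V) :=
  univ.filter fun f => (∀ i, f i ∈ J) ∧ IsPairing f

lemma mem_pairings {m : ℕ} {J : Finset V} {f : Fin m → V} :
    f ∈ pairings m J ↔ (∀ i, f i ∈ J) ∧ IsPairing f := by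
  simp [pairings]

lemma card_mul_sum_card_pairings_erase_le (m : ℕ) (J : Finset V) :
    (m + 1) * ∑ v ∈ J, #(pairings m (J.erase v)) ≤ #(pairings (m + 2) J) := by
  have hcard : #((univ : Finset (Fin (m + 1))) ×ˢ J.sigma fun v => pairings m (J.erase v))
      = (m + 1) * ∑ v ∈ J, #(pairings m (J.erase v)) := by
    rw [card_product, card_univ, Fintype.card_fin, card_sigma]
  rw [← hcard]
  refine card_le_card_of_injOn (fun d => insertPair d.1 d.2.1 d.2.2) ?_ ?_
  · rintro ⟨t, v, p⟩ hd
    simp only [coe_product, coe_sigma, Set.mem_prod, Set.mem_sigma_iff, mem_coe, mem_univ,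
      true_and, mem_pairings, mem_erase] at hd ⊢
    obtain ⟨hv, hpJ, hp⟩ := hd
    refine ⟨fun i => ?_, hp.insertPair (fun j => (hpJ j).1) t⟩
    rcases insertPair_eq_or t v p i with h | ⟨j, h⟩
    · rw [h]; exact hv
    · rw [h]; exact (hpJ j).2
  · rintro ⟨t, v, p⟩ hd ⟨t', v', p'⟩ - h
    simp only [coe_product, coe_sigma, Set.mem_prod, Set.mem_sigma_iff, mem_coe, mem_univ,
      true_and, mem_pairings, mem_erase] at hd
    obtain ⟨rfl, rfl, rfl⟩ := insertPair_inj (fun j => (hd.2.1 j).1) h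
    rfl

lemma doubleFactorial_two_mul_add_one_sub_one (k : ℕ) :
    (2 * (k + 1) - 1).doubleFactorial = (2 * k + 1) * (2 * k - 1).doubleFactorial := by
  rw [show 2 * (k + 1) - 1 = 2 * k + 1 by omega, Nat.doubleFactorial_add_one]

/-- `(2k-1)‼` pair partitions of `[2k]`, each labelled injectively by elements of `J`. -/
lemma doubleFactorial_mul_descFactorial_le_card_pairings (k : ℕ) (J : Finset V) :
    (2 * k - 1).doubleFactorial * (#J).descFactorial k ≤ #(pairings (2 * k) J) := by
  induction k generalizing J with
  | zero => simp [pairings, IsPairing]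
  | succ k ih =>
    rcases J.eq_empty_or_nonempty with rfl | hJ
    · simp
    obtain ⟨c, hc⟩ : ∃ c, #J = c + 1 := ⟨#J - 1, by have := hJ.card_pos; omega⟩
    calc (2 * (k + 1) - 1).doubleFactorial * (#J).descFactorial (k + 1)
        = (2 * k + 1) * ∑ v ∈ J, (2 * k - 1).doubleFactorial * (#(J.erase v)).descFactorial k := by
          rw [doubleFactorial_two_mul_add_one_sub_one, hc, Nat.succ_descFactorial_succ,
            sum_congr rfl fun v hv => by rw [card_erase_of_mem hv, hc, Nat.add_sub_cancel],
            sum_const, hc, smul_eq_mul]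
          ring
      _ ≤ (2 * k + 1) * ∑ v ∈ J, #(pairings (2 * k) (J.erase v)) :=
          Nat.mul_le_mul_left _ (sum_le_sum fun v _ => ih _)
      _ ≤ #(pairings (2 * (k + 1)) J) := card_mul_sum_card_pairings_erase_le (2 * k) J

lemma doubleFactorial_mul_descFactorial_le_card_isGoodPairing {E : V → V → Prop}
    {J : Finset V} (hJ : ∀ j ∈ J, ∀ j' ∈ J, j ≠ j' → E j j') (k : ℕ) :
    (2 * k - 1).doubleFactorial * (#J).descFactorial k
      ≤ #{f : Fin (2 * k) → V | IsGoodPairing E f} := by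
  refine (doubleFactorial_mul_descFactorial_le_card_pairings k J).trans (card_le_card ?_)
  intro f hf
  obtain ⟨hfJ, hpair⟩ := mem_pairings.1 hf
  exact mem_filter.2 ⟨mem_univ _, hpair, fun k l hkl =>
    ⟨hkl, fun i _ _ _ hne => hJ _ (hfJ i) _ (hfJ k) hne⟩⟩

end Counting

lemma sum_pow_eq_sum_prod_ofFn {A ι : Type*} [Semiring A] [Fintype ι] (f : ι → A) (m : ℕ) :
    (∑ i, f i) ^ m = ∑ idx : Fin m → ι, (List.ofFn fun k => f (idx k)).prod := by
  induction m with
  | zero => simp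
  | succ m ih =>
    rw [pow_succ', ih, mul_sum,
      ← (Fin.consEquiv fun _ => ι).sum_comp, Fintype.sum_prod_type, sum_comm]
    simp only [sum_mul]
    refine sum_congr rfl fun g _ => sum_congr rfl fun i _ => ?_
    simp [Fin.consEquiv, List.ofFn_succ]

lemma blockProd_eq_pow {A : Type*} [Monoid A] {m : ℕ} {a : Fin m → A} {B : Finset (Fin m)}
    {x : A} (hx : ∀ l ∈ B, a l = x) : blockProd a B = x ^ #B := by
  have : (B.sort (· ≤ ·)).map a = List.replicate #B x := by
    refine List.eq_replicate_iff.2 ⟨by simp, fun y hy => ?_⟩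
    obtain ⟨l, hl, rfl⟩ := List.mem_map.1 hy
    exact hx l ((mem_sort _).1 hl)
  rw [blockProd, this, List.prod_replicate]

lemma blockProd_kerGClass {A V : Type*} [Monoid A] {m : ℕ} (E : V → V → Prop) (a : V → A)
    (f : Fin m → V) (k : Fin m) :
    blockProd (fun k => a (f k)) (kerGClass E f k) = a (f k) ^ #(kerGClass E f k) :=
  blockProd_eq_pow fun _ hl => by rw [(mem_kerGClass.1 hl).1]

section Moments

variable {𝒜 : Type*} [Ring 𝒜] [Algebra ℂ 𝒜] (φ : 𝒜 →ₗ[ℂ] ℂ) {N m : ℕ}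
  (E : Fin N → Fin N → Prop) (a : Fin N → 𝒜)

/-- The value of `φ (a (idx 0) ⋯ a (idx (m-1)))` given by BMT independence. -/
def bmtTerm (idx : Fin m → Fin N) : ℂ :=
  ∏ B ∈ kerGBlocks E idx univ, φ (blockProd (fun k => a (idx k)) B)

lemma map_sum_pow_eq_sum_bmtTerm (h : BMTIndepVars φ E a) (m : ℕ) :
    φ ((∑ i, a i) ^ m) = ∑ idx : Fin m → Fin N, bmtTerm φ E a idx := by
  rw [sum_pow_eq_sum_prod_ofFn, map_sum]
  exact sum_congr rfl fun idx _ => h m idx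

variable {φ E a}

lemma bmtTerm_eq_zero (hmean : ∀ i, φ (a i) = 0) {idx : Fin m → Fin N} {k : Fin m}
    (h : kerGClass E idx k = {k}) : bmtTerm φ E a idx = 0 := by
  refine prod_eq_zero (i := {k}) (h ▸ mem_image_of_mem _ (mem_univ k)) ?_
  rw [← h, blockProd_kerGClass, h, card_singleton, pow_one, hmean]

lemma bmtTerm_eq_one (hvar : ∀ i, φ (a i * a i) = 1) {idx : Fin m → Fin N}
    (hgood : IsGoodPairing E idx) : bmtTerm φ E a idx = 1 := by
  refine prod_eq_one fun B hB => ?_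
  rw [kerGBlocks_univ] at hB
  obtain ⟨k, -, rfl⟩ := mem_image.1 hB
  rw [blockProd_kerGClass, kerGClass_eq_fiber (hgood.2 k), hgood.1 k, sq, hvar]

lemma norm_bmtTerm_le {C : ℝ} (hC : 1 ≤ C) (hmom : ∀ n ≤ m, ∀ i, ‖φ (a i ^ n)‖ ≤ C)
    (idx : Fin m → Fin N) : ‖bmtTerm φ E a idx‖ ≤ C ^ m := by
  rw [bmtTerm, norm_prod]
  calc ∏ B ∈ kerGBlocks E idx univ, ‖φ (blockProd (fun k => a (idx k)) B)‖
      ≤ ∏ _B ∈ kerGBlocks E idx univ, C := by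
        refine prod_le_prod (fun _ _ => norm_nonneg _) fun B hB => ?_
        rw [kerGBlocks_univ] at hB
        obtain ⟨k, -, rfl⟩ := mem_image.1 hB
        rw [blockProd_kerGClass]
        exact hmom _ ((card_le_univ _).trans_eq (Fintype.card_fin m)) _
    _ = C ^ #(kerGBlocks E idx univ) := prod_const C
    _ ≤ C ^ m := pow_le_pow_right₀ hC (card_image_le.trans_eq (card_fin m))

/-- Words of length `2k` using at least `k` letters contribute only through good pairings:
otherwise some letter occurs once, or some pair is not a block of `ker_G`. -/
lemma bmtTerm_eq_zero_of_not_isGoodPairing (hmean : ∀ i, φ (a i) = 0) {k : ℕ}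
    {idx : Fin (2 * k) → Fin N} (hng : ¬ IsGoodPairing E idx) (hk : k ≤ #(univ.image idx)) :
    bmtTerm φ E a idx = 0 := by
  by_cases hfib : ∀ i, 2 ≤ #(fiber idx i)
  · have hpair := isPairing_of_two_le_card_fiber hfib (by omega)
    obtain ⟨k₁, k₂, h₁₂, hrel⟩ : ∃ k₁ k₂, idx k₁ = idx k₂ ∧ ¬ kerGRelOn E idx univ k₁ k₂ := by
      simpa [IsGoodPairing, hpair] using hng
    have hne : k₁ ≠ k₂ := by rintro rfl; exact hrel (kerGRelOn_refl _ _)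
    have hfib₁ : fiber idx k₁ = {k₁, k₂} := by
      refine (eq_of_subset_of_card_le ?_ (by rw [hpair k₁, card_pair hne])).symm
      simp [insert_subset_iff, h₁₂]
    refine bmtTerm_eq_zero hmean (k := k₁) (kerGClass_eq_singleton fun l hl => ?_)
    have hl' := kerGClass_subset_fiber k₁ (mem_kerGClass.2 hl)
    rw [hfib₁, mem_insert, mem_singleton] at hl'
    rcases hl' with rfl | rfl
    · rfl
    · exact absurd hl hrel
  · push Not at hfib
    obtain ⟨i, hi⟩ := hfib
    refine bmtTerm_eq_zero hmean (k := i) (kerGClass_eq_singleton fun l hl => ?_)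
    exact card_le_one.1 (by omega) l (kerGClass_subset_fiber i (mem_kerGClass.2 hl)) i
      (mem_fiber.2 rfl)

lemma norm_map_sum_pow_sub_card_isGoodPairing_le (hmean : ∀ i, φ (a i) = 0)
    (hvar : ∀ i, φ (a i * a i) = 1) (hindep : BMTIndepVars φ E a) {k : ℕ} {C : ℝ}
    (hC : 1 ≤ C) (hmom : ∀ n ≤ 2 * k, ∀ i, ‖φ (a i ^ n)‖ ≤ C) :
    ‖φ ((∑ i, a i) ^ (2 * k)) - #{idx : Fin (2 * k) → Fin N | IsGoodPairing E idx}‖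
      ≤ #{idx : Fin (2 * k) → Fin N | #(univ.image idx) ≤ k - 1} * C ^ (2 * k) := by
  rw [map_sum_pow_eq_sum_bmtTerm φ E a hindep, natCast_card_filter, ← sum_sub_distrib]
  calc ‖∑ idx, (bmtTerm φ E a idx - if IsGoodPairing E idx then 1 else 0)‖
      ≤ ∑ idx : Fin (2 * k) → Fin N, if #(univ.image idx) ≤ k - 1 then C ^ (2 * k) else 0 := by
        refine (norm_sum_le _ _).trans (sum_le_sum fun idx _ => ?_)
        split_ifs with hgood hsmall hsmall
        · rw [bmtTerm_eq_one hvar hgood, sub_self, norm_zero]; positivity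
        · rw [bmtTerm_eq_one hvar hgood, sub_self, norm_zero]
        · rw [sub_zero]; exact norm_bmtTerm_le hC hmom idx
        · rw [bmtTerm_eq_zero_of_not_isGoodPairing hmean hgood (by omega), sub_zero, norm_zero]
    _ = _ := by rw [← sum_filter, sum_const, nsmul_eq_mul]

lemma norm_map_sum_pow_sub_card_isGoodPairing_le_mul_pow (hmean : ∀ i, φ (a i) = 0)
    (hvar : ∀ i, φ (a i * a i) = 1) (hindep : BMTIndepVars φ E a) (hN : 1 ≤ N) {k : ℕ} {C : ℝ}
    (hC : 1 ≤ C) (hmom : ∀ n ≤ 2 * k, ∀ i, ‖φ (a i ^ n)‖ ≤ C) :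
    ‖φ ((∑ i, a i) ^ (2 * k)) - #{idx : Fin (2 * k) → Fin N | IsGoodPairing E idx}‖
      ≤ ((k - 1 : ℕ) ^ (2 * k) * C ^ (2 * k) : ℝ) * (N : ℝ) ^ (k - 1) := by
  have : Nonempty (Fin N) := ⟨⟨0, hN⟩⟩
  have hsmall := card_filter_card_image_le (α := Fin (2 * k)) (β := Fin N) (k - 1)
  rw [Fintype.card_fin, Fintype.card_fin] at hsmall
  calc _ ≤ #{idx : Fin (2 * k) → Fin N | #(univ.image idx) ≤ k - 1} * C ^ (2 * k) :=
        norm_map_sum_pow_sub_card_isGoodPairing_le hmean hvar hindep hC hmom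
    _ ≤ (((k - 1) ^ (2 * k) * N ^ (k - 1) : ℕ) : ℝ) * C ^ (2 * k) := by gcongr
    _ = _ := by push_cast; ring

end Moments

lemma exists_one_le_forall_le {ι : Type*} {F : ℕ → ι → ℝ} (h : ∀ n, ∃ C, ∀ i, F n i ≤ C)
    (m : ℕ) : ∃ C, 1 ≤ C ∧ ∀ n ≤ m, ∀ i, F n i ≤ C := by
  choose C hC using h
  obtain ⟨B, hB⟩ := ((range (m + 1)).image C).bddAbove
  refine ⟨max 1 B, le_max_left _ _, fun n hn i => (hC n i).trans (le_max_of_le_right (hB ?_))⟩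
  simpa using ⟨n, by omega, rfl⟩

open Topology in
lemma tendsto_div_pow_of_norm_sub_le {x : ℕ → ℂ} {y : ℕ → ℝ} {k : ℕ} {K μ : ℝ} (hk : 1 ≤ k)
    (hx : Tendsto (fun N : ℕ => x N / ((Real.sqrt N : ℝ) : ℂ) ^ (2 * k)) atTop (𝓝 (μ : ℂ)))
    (hxy : ∀ᶠ N : ℕ in atTop, ‖x N - y N‖ ≤ K * (N : ℝ) ^ (k - 1)) :
    Tendsto (fun N : ℕ => y N / (N : ℝ) ^ k) atTop (𝓝 μ) := by
  have hsqrt (N : ℕ) : ((Real.sqrt N : ℝ) : ℂ) ^ (2 * k) = (((N : ℝ) ^ k : ℝ) : ℂ) := by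
    rw [← Complex.ofReal_pow, pow_mul, Real.sq_sqrt N.cast_nonneg]
  have hdiff : Tendsto (fun N : ℕ => x N / ((Real.sqrt N : ℝ) : ℂ) ^ (2 * k)
      - ((y N / (N : ℝ) ^ k : ℝ) : ℂ)) atTop (𝓝 0) := by
    refine squeeze_zero_norm' ?_ (tendsto_const_div_atTop_nhds_zero_nat K)
    filter_upwards [hxy, eventually_ge_atTop 1] with N hN hN1
    have hpos : (0 : ℝ) < N := by exact_mod_cast hN1
    rw [hsqrt, Complex.ofReal_div, ← sub_div, norm_div, Complex.norm_real,
      Real.norm_of_nonneg (by positivity), div_le_div_iff₀ (by positivity) hpos]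
    calc ‖x N - y N‖ * N ≤ K * (N : ℝ) ^ (k - 1) * N := by gcongr
      _ = K * (N : ℝ) ^ k := by rw [mul_assoc, ← pow_succ, Nat.sub_add_cancel hk]
  simpa using Filter.tendsto_ofReal_iff.1 (by simpa using hx.sub hdiff)

lemma eventually_le_div_pow {g M : ℕ → ℕ} {c : ℝ} {d k : ℕ} (hc : 0 < c)
    (hclt : c < liminf (fun N : ℕ => (M N : ℝ) / (2 * N)) atTop)
    (hg : ∀ N, d * (M N).descFactorial k ≤ g N) :
    ∀ᶠ N : ℕ in atTop, (d : ℝ) * c ^ k ≤ g N / (N : ℝ) ^ k := by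
  have hMN := eventually_lt_of_lt_liminf hclt
    (isBoundedUnder_of ⟨0, fun N => by positivity⟩)
  have hkN : ∀ᶠ N : ℕ in atTop, (k : ℝ) ≤ c * N :=
    (tendsto_natCast_atTop_atTop.const_mul_atTop hc).eventually_ge_atTop _
  filter_upwards [hMN, hkN, eventually_ge_atTop 1] with N hMN hkN hN
  have hpos : (0 : ℝ) < N := by exact_mod_cast hN
  rw [lt_div_iff₀ (by positivity)] at hMN
  have hkM : k ≤ M N := by exact_mod_cast (by nlinarith : (k : ℝ) ≤ M N)
  have hcN : c * N ≤ ((M N + 1 - k : ℕ) : ℝ) := by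
    rw [Nat.cast_sub (by omega)]
    push_cast
    nlinarith
  rw [le_div_iff₀ (by positivity)]
  calc (d : ℝ) * c ^ k * N ^ k = d * (c * N) ^ k := by ring
    _ ≤ d * ((M N + 1 - k : ℕ) : ℝ) ^ k := by gcongr
    _ ≤ d * (M N).descFactorial k := by
        gcongr
        exact_mod_cast Nat.pow_sub_le_descFactorial _ _
    _ ≤ g N := by exact_mod_cast hg N

lemma liminf_div_two {u : ℕ → ℝ} {b₀ b₁ : ℝ} (h₀ : ∀ n, b₀ ≤ u n) (h₁ : ∀ n, u n ≤ b₁) :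
    liminf (fun n => u n / 2) atTop = liminf u atTop / 2 := by
  have hmono : Monotone fun x : ℝ => x / 2 := fun _ _ h => div_le_div_of_nonneg_right h zero_le_two
  exact (hmono.map_liminf_of_continuousAt u (continuous_id.div_const 2).continuousAt
    (isCoboundedUnder_ge_of_le atTop h₁) (isBoundedUnder_of ⟨b₀, h₀⟩)).symm

lemma liminf_div_two_mul_pos {M : ℕ → ℕ} (hM : ∀ N, M N ≤ N)
    (h : 0 < liminf (fun N : ℕ => (M N : ℝ) / N) atTop) :
    0 < liminf (fun N : ℕ => (M N : ℝ) / (2 * N)) atTop := by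
  have hle (N : ℕ) : (M N : ℝ) / N ≤ 1 := div_le_one_of_le₀ (by exact_mod_cast hM N) N.cast_nonneg
  have hhalf : liminf (fun N : ℕ => (M N : ℝ) / (2 * N)) atTop
      = liminf (fun N : ℕ => (M N : ℝ) / N) atTop / 2 := by
    rw [← liminf_div_two (fun N => by positivity) hle]
    simp only [div_div, mul_comm]
  rw [hhalf]
  positivity

lemma factorial_le_doubleFactorial_two_mul_sub_one (k : ℕ) :
    k.factorial ≤ (2 * k - 1).doubleFactorial := by
  induction k with
  | zero => rfl
  | succ k ih =>
    rw [doubleFactorial_two_mul_add_one_sub_one, Nat.factorial_succ]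
    exact Nat.mul_le_mul (by omega) ih

/-- `(2k-1)‼ ≥ k!` outgrows every geometric sequence. -/
lemma exists_lt_rpow_of_doubleFactorial_mul_pow_le {μ : ℕ → ℝ} {c : ℝ} (hc : 0 < c)
    (h : ∀ k : ℕ, 1 ≤ k → ((2 * k - 1).doubleFactorial : ℝ) * c ^ k ≤ μ k) (R : ℝ) :
    ∃ k : ℕ, 1 ≤ k ∧ R < μ k ^ ((1 : ℝ) / (2 * k)) := by
  obtain ⟨n, hlt, hn⟩ : ∃ n : ℕ, (R ^ 2 / c) ^ n / n.factorial < 1 ∧ 1 ≤ n :=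
    (((FloorSemiring.tendsto_pow_div_factorial_atTop _).eventually
      (eventually_lt_nhds one_pos)).and (eventually_ge_atTop 1)).exists
  have hR : R ^ (2 * n) < μ n :=
    calc R ^ (2 * n) = (R ^ 2 / c) ^ n * c ^ n := by
          rw [← mul_pow, div_mul_cancel₀ _ hc.ne', pow_mul]
      _ < n.factorial * c ^ n := by
          gcongr
          rwa [div_lt_one (by positivity)] at hlt
      _ ≤ (2 * n - 1).doubleFactorial * c ^ n := by
          gcongr
          exact_mod_cast factorial_le_doubleFactorial_two_mul_sub_one n
      _ ≤ μ n := h n hn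
  have hμ : 0 ≤ μ n := ((even_two_mul n).pow_nonneg R).trans hR.le
  refine ⟨n, hn, ?_⟩
  rcases lt_or_ge R 0 with hR0 | hR0
  · exact hR0.trans_le (Real.rpow_nonneg hμ _)
  · rw [one_div, Real.lt_rpow_inv_iff_of_pos hR0 hμ (by positivity)]
    exact_mod_cast hR

theorem stmt18_general {𝒜 : Type*} [Ring 𝒜] [Algebra ℂ 𝒜] (φ : 𝒜 →ₗ[ℂ] ℂ)
    (a : (N : ℕ) → Fin N → 𝒜) (E : (N : ℕ) → Fin N → Fin N → Prop)
    (hmean : ∀ N i, φ (a N i) = 0)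
    (hvar : ∀ N i, φ (a N i * a N i) = 1)
    (hindep : ∀ N, BMTIndepVars φ (E N) (a N))
    (hmom : ∀ n : ℕ, ∃ C : ℝ, ∀ N, ∀ i : Fin N, ‖φ (a N i ^ n)‖ ≤ C)
    (M : ℕ → ℕ)
    (hM : ∀ N, IsGreatest
      {M' : ℕ | ∃ J : Finset (Fin N), J.card = M' ∧
        ∀ j ∈ J, ∀ j' ∈ J, j ≠ j' → E N j j'} (M N))
    (hliminf : 0 < Filter.liminf (fun N : ℕ => (M N : ℝ) / N) atTop)
    (mom : ℕ → ℝ)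
    (hmom2 : ∀ k : ℕ, 1 ≤ k →
      Tendsto
        (fun N : ℕ => φ ((∑ i : Fin N, a N i) ^ (2 * k)) / ((Real.sqrt N : ℝ) : ℂ) ^ (2 * k))
        atTop (nhds ((mom k : ℂ)))) :
    (∀ c : ℝ, 0 < c → c < Filter.liminf (fun N : ℕ => (M N : ℝ) / (2 * N)) atTop →
      ∀ k : ℕ, 1 ≤ k → ((2 * k - 1).doubleFactorial : ℝ) * c ^ k ≤ mom k) ∧
    (∀ R : ℝ, ∃ k : ℕ, 1 ≤ k ∧ R < mom k ^ ((1 : ℝ) / (2 * k))) := by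
  have hlower (c : ℝ) (hc : 0 < c) (hclt : c < liminf (fun N : ℕ => (M N : ℝ) / (2 * N)) atTop)
      (k : ℕ) (hk : 1 ≤ k) : ((2 * k - 1).doubleFactorial : ℝ) * c ^ k ≤ mom k := by
    obtain ⟨C, hC, hCmom⟩ := exists_one_le_forall_le
      (F := fun n (p : Σ N, Fin N) => ‖φ (a p.1 p.2 ^ n)‖)
      (fun n => (hmom n).imp fun _ hC p => hC p.1 p.2) (2 * k)
    have herr : ∀ᶠ N : ℕ in atTop, ‖φ ((∑ i, a N i) ^ (2 * k))
        - ((#{idx : Fin (2 * k) → Fin N | IsGoodPairing (E N) idx} : ℝ) : ℂ)‖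
        ≤ ((k - 1 : ℕ) ^ (2 * k) * C ^ (2 * k) : ℝ) * (N : ℝ) ^ (k - 1) := by
      filter_upwards [eventually_ge_atTop 1] with N hN
      simpa using norm_map_sum_pow_sub_card_isGoodPairing_le_mul_pow (hmean N) (hvar N)
        (hindep N) hN hC fun n hn i => hCmom n hn ⟨N, i⟩
    refine ge_of_tendsto (tendsto_div_pow_of_norm_sub_le hk (hmom2 k hk) herr)
      (eventually_le_div_pow hc hclt fun N => ?_)
    obtain ⟨J, hJcard, hJ⟩ := (hM N).1
    exact hJcard ▸ doubleFactorial_mul_descFactorial_le_card_isGoodPairing hJ k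
  have hMN (N : ℕ) : M N ≤ N := by
    obtain ⟨J, hJcard, -⟩ := (hM N).1
    exact hJcard ▸ (card_le_univ J).trans_eq (Fintype.card_fin N)
  have hpos := liminf_div_two_mul_pos hMN hliminf
  exact ⟨hlower, exists_lt_rpow_of_doubleFactorial_mul_pow_le (half_pos hpos)
    (hlower _ (half_pos hpos) (half_lt_self hpos))⟩

/-- if the graphs `G_N` contain complete digraphs on `M_N` vertices with
`liminf M_N / N > 0`, then the even limiting moments `m_{2k}` satisfy
`m_{2k} ≥ (2k-1)!! c^k` for every `0 < c < liminf M_N/(2N)`, and consequently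
`sup_k (m_{2k})^{1/(2k)} = +∞` (the limiting distribution has non-compact support). -/
theorem stmt18 {𝒜 : Type*} [Ring 𝒜] [Algebra ℂ 𝒜] (φ : 𝒜 →ₗ[ℂ] ℂ) (hφ : φ 1 = 1)
    (a : (N : ℕ) → Fin N → 𝒜) (E : (N : ℕ) → Fin N → Fin N → Prop)
    (hE : ∀ N v, ¬ E N v v)
    (hmean : ∀ N i, φ (a N i) = 0)
    (hvar : ∀ N i, φ (a N i * a N i) = 1)
    (hindep : ∀ N, BMTIndepVars φ (E N) (a N))
    (hmom : ∀ n : ℕ, ∃ C : ℝ, ∀ N, ∀ i : Fin N, ‖φ (a N i ^ n)‖ ≤ C)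
    (M : ℕ → ℕ)
    (hM : ∀ N, IsGreatest
      {M' : ℕ | ∃ J : Finset (Fin N), J.card = M' ∧
        ∀ j ∈ J, ∀ j' ∈ J, j ≠ j' → E N j j'} (M N))
    (hliminf : 0 < Filter.liminf (fun N : ℕ => (M N : ℝ) / N) atTop)
    (mom : ℕ → ℝ)
    (hmom2 : ∀ k : ℕ, 1 ≤ k →
      Tendsto
        (fun N : ℕ => φ ((∑ i : Fin N, a N i) ^ (2 * k)) / ((Real.sqrt N : ℝ) : ℂ) ^ (2 * k))
        atTop (nhds ((mom k : ℂ)))) :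
    (∀ c : ℝ, 0 < c → c < Filter.liminf (fun N : ℕ => (M N : ℝ) / (2 * N)) atTop →
      ∀ k : ℕ, 1 ≤ k → ((2 * k - 1).doubleFactorial : ℝ) * c ^ k ≤ mom k) ∧
    (∀ R : ℝ, ∃ k : ℕ, 1 ≤ k ∧ R < mom k ^ ((1 : ℝ) / (2 * k))) :=
  stmt18_general φ a E hmean hvar hindep hmom M hM hliminf mom hmom2

end
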